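/- If μ is a nonzero complex number with μ² + μ⁻² = 2 − ω, μ + μ⁻¹ ≠ 0, and |μ| ≠ 1, then |τ_n| tends to infinity as n → ∞. -/

import Mathlib

open Matrix

/-- The matrix `X = [[1,1],[0,1]]`. -/
noncomputable def Xmat : Matrix (Fin 2) (Fin 2) ℂ := !![1, 1; 0, 1]

/-- The matrix `Y = [[1,0],[ω,1]]`. -/
noncomputable def Ymat (ω : ℂ) : Matrix (Fin 2) (Fin 2) ℂ := !![1, 0; ω, 1]

/-- `τ n` is the trace of `X ⬝ (Y ⬝ X⁻¹)^n`. -/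
noncomputable def τ (ω : ℂ) (n : ℕ) : ℂ := (Xmat * (Ymat ω * Xmat⁻¹) ^ n).trace

/-!
`M = Y X⁻¹` has determinant `1` and trace `2 - ω = μ² + μ⁻²`, so by Cayley–Hamilton the traces
`τ_n = tr (X Mⁿ)` satisfy the linear recurrence whose characteristic roots are `μ²` and `μ⁻²`.
Matching `τ_0 = τ_1 = 2` gives `τ_n = 2 μ²ⁿ / (μ² + 1) + 2 μ⁻²ⁿ / (μ⁻² + 1)`. When `|μ| ≠ 1`
exactly one root lies outside the unit circle and its coefficient is nonzero, so `|τ_n| → ∞`.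
-/

open Filter

theorem Matrix.sq_eq_trace_smul_sub_det_smul {R : Type*} [CommRing R]
    (M : Matrix (Fin 2) (Fin 2) R) : M ^ 2 = M.trace • M - M.det • 1 := by
  ext i j
  fin_cases i <;> fin_cases j <;>
    simp [sq, mul_apply, trace_fin_two, det_fin_two] <;> ring

theorem Matrix.trace_mul_pow_add_two {R : Type*} [CommRing R]
    (A M : Matrix (Fin 2) (Fin 2) R) (n : ℕ) :
    (A * M ^ (n + 2)).trace = M.trace * (A * M ^ (n + 1)).trace - M.det * (A * M ^ n).trace := by
  have h : A * M ^ (n + 2) = M.trace • (A * M ^ (n + 1)) - M.det • (A * M ^ n) := by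
    rw [pow_add, ← mul_assoc, sq_eq_trace_smul_sub_det_smul, mul_sub, Matrix.mul_smul,
      Matrix.mul_smul, mul_one, pow_succ, mul_assoc]
  rw [h, trace_sub, trace_smul, trace_smul, smul_eq_mul, smul_eq_mul]

theorem eq_add_pow_of_rec {R : Type*} [CommRing R] {s : ℕ → R} {a b α β : R}
    (hrec : ∀ n, s (n + 2) = (α + β) * s (n + 1) - α * β * s n)
    (h0 : s 0 = a + b) (h1 : s 1 = a * α + b * β) (n : ℕ) :
    s n = a * α ^ n + b * β ^ n := by
  induction n using Nat.twoStepInduction with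
  | zero => simpa using h0
  | one => simpa using h1
  | more n ihn ihn1 => rw [hrec, ihn, ihn1]; ring

theorem tendsto_norm_mul_pow_add_mul_pow {𝕜 : Type*} [NormedDivisionRing 𝕜] {a b α β : 𝕜}
    (ha : a ≠ 0) (hα : 1 < ‖α‖) (hβ : ‖β‖ ≤ 1) :
    Tendsto (fun n : ℕ => ‖a * α ^ n + b * β ^ n‖) atTop atTop := by
  have hlower (n : ℕ) : ‖a‖ * ‖α‖ ^ n - ‖b‖ ≤ ‖a * α ^ n + b * β ^ n‖ := by
    have hb : ‖b * β ^ n‖ ≤ ‖b‖ := by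
      rw [norm_mul, norm_pow]
      exact mul_le_of_le_one_right (norm_nonneg b) (pow_le_one₀ (norm_nonneg β) hβ)
    calc ‖a‖ * ‖α‖ ^ n - ‖b‖ ≤ ‖a * α ^ n‖ - ‖b * β ^ n‖ := by
          rw [norm_mul, norm_pow]; linarith
      _ ≤ ‖a * α ^ n + b * β ^ n‖ := by
          simpa using norm_sub_norm_le (a * α ^ n) (-(b * β ^ n))
  refine tendsto_atTop_mono hlower ?_
  exact tendsto_atTop_add_const_right _ _
    ((tendsto_pow_atTop_atTop_of_one_lt hα).const_mul_atTop (norm_pos_iff.mpr ha))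

theorem Xmat_inv : Xmat⁻¹ = !![1, -1; 0, 1] := by
  refine inv_eq_right_inv ?_
  ext i j
  fin_cases i <;> fin_cases j <;> simp [Xmat, mul_apply]

theorem trace_Ymat_mul_Xmat_inv (ω : ℂ) : (Ymat ω * Xmat⁻¹).trace = 2 - ω := by
  simp [Xmat_inv, Ymat, trace_fin_two]
  ring

theorem det_Ymat_mul_Xmat_inv (ω : ℂ) : (Ymat ω * Xmat⁻¹).det = 1 := by
  simp [Xmat_inv, Ymat, det_fin_two]

theorem τ_zero (ω : ℂ) : τ ω 0 = 2 := by
  norm_num [τ, Xmat, trace_fin_two]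

theorem τ_one (ω : ℂ) : τ ω 1 = 2 := by
  rw [τ, pow_one, Xmat_inv]
  simp [Xmat, Ymat, trace_fin_two]
  ring

theorem τ_add_two (ω : ℂ) (n : ℕ) : τ ω (n + 2) = (2 - ω) * τ ω (n + 1) - τ ω n := by
  simp only [τ]
  rw [trace_mul_pow_add_two, trace_Ymat_mul_Xmat_inv, det_Ymat_mul_Xmat_inv, one_mul]

theorem τ_eq_of_sq_add_inv_sq {ω μ : ℂ} (hμ : μ ≠ 0) (hμ1 : μ ^ 2 + 1 ≠ 0)
    (hchar : μ ^ 2 + μ⁻¹ ^ 2 = 2 - ω) (n : ℕ) :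
    τ ω n = 2 / (μ ^ 2 + 1) * (μ ^ 2) ^ n + 2 / (μ⁻¹ ^ 2 + 1) * (μ⁻¹ ^ 2) ^ n := by
  have hinv : μ⁻¹ ^ 2 + 1 = (μ ^ 2 + 1) / μ ^ 2 := by field_simp; ring
  refine eq_add_pow_of_rec (fun k => ?_) ?_ ?_ n
  · rw [τ_add_two, ← hchar, ← mul_pow, mul_inv_cancel₀ hμ, one_pow, one_mul]
  · rw [τ_zero, hinv]; field_simp; ring
  · rw [τ_one, hinv]; field_simp

theorem tendsto_norm_τ_of_one_lt_norm {ω μ : ℂ} (hchar : μ ^ 2 + μ⁻¹ ^ 2 = 2 - ω)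
    (h : 1 < ‖μ‖) : Tendsto (fun n : ℕ => ‖τ ω n‖) atTop atTop := by
  have hμ : μ ≠ 0 := norm_pos_iff.mp (one_pos.trans h)
  have hsq : 1 < ‖μ ^ 2‖ := by rw [norm_pow]; exact one_lt_pow₀ h two_ne_zero
  have hμ1 : μ ^ 2 + 1 ≠ 0 := by
    intro h0
    rw [add_eq_zero_iff_eq_neg.mp h0, norm_neg, norm_one] at hsq
    exact hsq.false
  have hinv : ‖μ⁻¹ ^ 2‖ ≤ 1 := by
    rw [inv_pow, norm_inv]; exact inv_le_one_of_one_le₀ hsq.le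
  simp_rw [τ_eq_of_sq_add_inv_sq hμ hμ1 hchar]
  exact tendsto_norm_mul_pow_add_mul_pow (div_ne_zero two_ne_zero hμ1) hsq hinv

theorem tau_abs_tendsto_atTop_general (ω μ : ℂ) (hμ : μ ≠ 0)
    (hchar : μ ^ 2 + μ⁻¹ ^ 2 = 2 - ω)
    (habs : ‖μ‖ ≠ 1) :
    Filter.Tendsto (fun n : ℕ => ‖τ ω n‖) Filter.atTop Filter.atTop := by
  rcases habs.lt_or_gt with h | h
  · -- the hypotheses are symmetric under `μ ↦ μ⁻¹`
    refine tendsto_norm_τ_of_one_lt_norm (μ := μ⁻¹) (by rwa [inv_inv, add_comm]) ?_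
    rw [norm_inv]
    exact one_lt_inv₀ (norm_pos_iff.mpr hμ) |>.mpr h
  · exact tendsto_norm_τ_of_one_lt_norm hchar h

theorem tau_abs_tendsto_atTop (ω μ : ℂ) (hμ : μ ≠ 0)
    (hchar : μ ^ 2 + μ⁻¹ ^ 2 = 2 - ω) (hden : μ + μ⁻¹ ≠ 0)
    (habs : ‖μ‖ ≠ 1) :
    Filter.Tendsto (fun n : ℕ => ‖τ ω n‖) Filter.atTop Filter.atTop :=
  tau_abs_tendsto_atTop_general ω μ hμ hchar habs
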